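/- arXiv:1904.04692 — 7 statements merged into one kernel-verified Lean document; each statement's English description precedes it below -/
import Mathlib

section
/- Let q ≥ 1 and let g: ℝⁿ → ℝ be q-times continuously differentiable with ‖D^q g(x) − D^q g(y)‖ ≤ (q−1)! L ‖x−y‖ for all x, y ∈ ℝⁿ (norm of q-linear forms induced by the Euclidean norm). Then for all x, s ∈ ℝⁿ, ‖∇g(x+s) − ∇_s T_q(x,s)‖ ≤ L ‖s‖^{q}. -/
/-!
The gradient difference has the norm of `Dg(x + s) - D_s T_q(x, s)` as a linear form, so it
suffices to test it against a direction `p`. Along the segment `t ↦ x + t • s`, the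
function `h t = Dg(x + t s)[p]` has Taylor coefficients `D^{i+1}g(x)[s,…,s,p] / i!` at `0`; by
the symmetry of iterated derivatives these are exactly the coefficients of the derivative of
`T_q(x, ·)` at `s` in direction `p`. The Lagrange form of Taylor's theorem for `h` bounds the
remainder by the oscillation of `h^{(q-1)}` on `[0, 1]` divided by `(q-1)!`, and the Lipschitz
bound on `D^q g` makes that oscillation at most `(q-1)! L ‖s‖^q ‖p‖`.
-/

open scoped BigOperators

/-- The `q`-th order Taylor polynomial of `g` at `x`:
`T_q(x,s) = ∑_{i=0}^{q} (1/i!) Dⁱg(x)[s,…,s]`. -/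
noncomputable def taylorPoly {n : ℕ} (q : ℕ) (g : EuclideanSpace ℝ (Fin n) → ℝ)
    (x s : EuclideanSpace ℝ (Fin n)) : ℝ :=
  ∑ i ∈ Finset.range (q + 1),
    (1 / (Nat.factorial i) : ℝ) * iteratedFDeriv ℝ i g x (fun _ => s)

open Set Finset Function
open scoped Nat

theorem abs_sub_taylor_le_of_abs_iteratedDeriv_sub_le {h : ℝ → ℝ} {m : ℕ} {M : ℝ}
    (hh : ContDiff ℝ m h)
    (hM : ∀ t ∈ Icc (0 : ℝ) 1, |iteratedDeriv m h t - iteratedDeriv m h 0| ≤ M) :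
    |h 1 - ∑ i ∈ range (m + 1), iteratedDeriv i h 0 / i !| ≤ M / m ! := by
  cases m with
  | zero => simpa using hM 1 ⟨zero_le_one, le_rfl⟩
  | succ k =>
    -- Lagrange remainder of order `k` at some `ξ`, minus the last Taylor term taken at `0`.
    obtain ⟨ξ, hξ, hlagrange⟩ :=
      taylor_mean_remainder_lagrange_iteratedDeriv zero_ne_one hh.contDiffOn
    have htaylor : taylorWithinEval h k (uIcc 0 1) 0 1
        = ∑ i ∈ range (k + 1), iteratedDeriv i h 0 / i ! := by
      rw [taylor_within_apply]
      refine sum_congr rfl fun i hi => ?_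
      have hhi : ContDiffAt ℝ i h 0 :=
        (hh.of_le (by exact_mod_cast (mem_range.1 hi).le)).contDiffAt
      rw [iteratedDerivWithin_eq_iteratedDeriv (uniqueDiffOn_uIcc zero_ne_one) hhi
        left_mem_uIcc]
      simp [div_eq_inv_mul]
    rw [sum_range_succ, ← sub_sub, ← htaylor, hlagrange, sub_zero, one_pow, mul_one, ← sub_div,
      abs_div, Nat.abs_cast]
    rw [uIoo_of_le zero_le_one] at hξ
    gcongr
    exact hM ξ (Ioo_subset_Icc_self hξ)

section

variable {E F : Type*} [NormedAddCommGroup E] [NormedSpace ℝ E]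
  [NormedAddCommGroup F] [NormedSpace ℝ F]

noncomputable def dirDeriv (v : E) (h : E → F) : E → F := fun y => fderiv ℝ h y v

theorem ContDiff.dirDeriv {k : ℕ} {h : E → F} (hh : ContDiff ℝ (k + 1) h) (v : E) :
    ContDiff ℝ k (dirDeriv v h) :=
  (hh.fderiv_right le_rfl).clm_apply contDiff_const

theorem iteratedFDeriv_succ_apply_snoc {k : ℕ} {h : E → F} (hh : ContDiff ℝ (k + 1) h)
    (x : E) (m : Fin k → E) (v : E) :
    iteratedFDeriv ℝ (k + 1) h x (Fin.snoc m v) = iteratedFDeriv ℝ k (dirDeriv v h) x m := by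
  have hcomp : dirDeriv v h = ContinuousLinearMap.apply ℝ F v ∘ fderiv ℝ h := rfl
  rw [iteratedFDeriv_succ_apply_right, hcomp,
    ContinuousLinearMap.iteratedFDeriv_comp_left _ (hh.fderiv_right le_rfl).contDiffAt le_rfl]
  simp

theorem dirDeriv_comm {h : E → F} (hh : ContDiff ℝ 2 h) (u v : E) :
    dirDeriv u (dirDeriv v h) = dirDeriv v (dirDeriv u h) := by
  have hfd : ContDiff ℝ 1 (fderiv ℝ h) := hh.fderiv_right (by norm_num)
  have second (y u v : E) : dirDeriv u (dirDeriv v h) y = fderiv ℝ (fderiv ℝ h) y u v := by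
    change fderiv ℝ (fun z => fderiv ℝ h z v) y u = _
    simp [fderiv_clm_apply (hfd.differentiable one_ne_zero y) (differentiableAt_const v)]
  funext y
  rw [second, second]
  exact second_derivative_symmetric (fun z => (hh.differentiable (by norm_num) z).hasFDerivAt)
    (hfd.differentiable one_ne_zero y).hasFDerivAt u v

/-- A special case of the symmetry of `D^{k+1} h`; induction on `k` reduces it to Schwarz's
theorem `dirDeriv_comm`. -/
theorem iteratedFDeriv_succ_apply_update_const {k : ℕ} {h : E → F} (hh : ContDiff ℝ (k + 1) h)
    (x s p : E) (j : Fin (k + 1)) :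
    iteratedFDeriv ℝ (k + 1) h x (update (fun _ => s) j p)
      = iteratedFDeriv ℝ k (dirDeriv p h) x (fun _ => s) := by
  have hconst (n : ℕ) : (fun _ : Fin (n + 1) => s) = Fin.snoc (fun _ : Fin n => s) s :=
    (Fin.snoc_init_self _).symm
  induction k generalizing h with
  | zero =>
    rw [Fin.fin_one_eq_zero j, ← Fin.last_zero, hconst 0, Fin.update_snoc_last,
      iteratedFDeriv_succ_apply_snoc hh]
  | succ k ih =>
    induction j using Fin.lastCases with
    | last => rw [hconst (k + 1), Fin.update_snoc_last, iteratedFDeriv_succ_apply_snoc hh]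
    | cast i =>
      have hh2 : ContDiff ℝ 2 h := hh.of_le (by exact_mod_cast Nat.le_add_left 2 k)
      rw [hconst (k + 1), ← Fin.snoc_update, iteratedFDeriv_succ_apply_snoc hh,
        ih (hh.dirDeriv s), dirDeriv_comm hh2, ← iteratedFDeriv_succ_apply_snoc (hh.dirDeriv p),
        ← hconst k]

theorem ContinuousMultilinearMap.hasFDerivAt_apply_const {k : ℕ}
    (A : ContinuousMultilinearMap ℝ (fun _ : Fin k => E) F) (s : E) :
    HasFDerivAt (fun u => A fun _ => u) (∑ j, A.toContinuousLinearMap (fun _ => s) j) s := by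
  have hdiag := (ContinuousLinearMap.pi fun _ : Fin k => ContinuousLinearMap.id ℝ E).hasFDerivAt
    (x := s)
  refine (A.hasFDerivAt (fun _ => s) |>.comp s hdiag).congr_fderiv ?_
  ext p
  simp

theorem iteratedDeriv_comp_add_smul {f : E → F} {m : ℕ} (hf : ContDiff ℝ m f) {j : ℕ}
    (hj : j ≤ m) (x s : E) (t : ℝ) :
    iteratedDeriv j (fun u : ℝ => f (x + u • s)) t
      = iteratedFDeriv ℝ j f (x + t • s) (fun _ => s) := by
  have hline : (fun u : ℝ => f (x + u • s))
      = (fun z => f (x + z)) ∘ ContinuousLinearMap.toSpanSingleton ℝ s := rfl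
  have hshift : ContDiff ℝ m fun z => f (x + z) := hf.comp (contDiff_const.add contDiff_id)
  rw [iteratedDeriv_eq_iteratedFDeriv, hline,
    ContinuousLinearMap.iteratedFDeriv_comp_right _ hshift _ (by exact_mod_cast hj),
    iteratedFDeriv_comp_add_left]
  simp

theorem abs_fderiv_apply_sub_taylor_le {g : E → ℝ} {m : ℕ} (hg : ContDiff ℝ (m + 1) g)
    {x s : E} {K : ℝ}
    (hK : ∀ t ∈ Icc (0 : ℝ) 1,
      ‖iteratedFDeriv ℝ (m + 1) g (x + t • s) - iteratedFDeriv ℝ (m + 1) g x‖ ≤ K) (p : E) :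
    |fderiv ℝ g (x + s) p
        - ∑ i ∈ range (m + 1), iteratedFDeriv ℝ i (dirDeriv p g) x (fun _ => s) / i !|
      ≤ K * ‖s‖ ^ m * ‖p‖ / m ! := by
  set h : ℝ → ℝ := fun t => dirDeriv p g (x + t • s)
  have hline {i : ℕ} (hi : i ≤ m) (t : ℝ) :
      iteratedDeriv i h t = iteratedFDeriv ℝ i (dirDeriv p g) (x + t • s) (fun _ => s) :=
    iteratedDeriv_comp_add_smul (hg.dirDeriv p) hi x s t
  have hM (t : ℝ) (ht : t ∈ Icc (0 : ℝ) 1) :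
      |iteratedDeriv m h t - iteratedDeriv m h 0| ≤ K * ‖s‖ ^ m * ‖p‖ := by
    rw [hline le_rfl, hline le_rfl, zero_smul, add_zero, ← iteratedFDeriv_succ_apply_snoc hg,
      ← iteratedFDeriv_succ_apply_snoc hg, ← sub_apply, ← Real.norm_eq_abs]
    calc _ ≤ ‖iteratedFDeriv ℝ (m + 1) g (x + t • s) - iteratedFDeriv ℝ (m + 1) g x‖
          * ∏ i, ‖(Fin.snoc (fun _ => s) p : Fin (m + 1) → E) i‖ :=
          ContinuousMultilinearMap.le_opNorm _ _
      _ = ‖iteratedFDeriv ℝ (m + 1) g (x + t • s) - iteratedFDeriv ℝ (m + 1) g x‖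
          * (‖s‖ ^ m * ‖p‖) := by simp [Fin.prod_univ_castSucc]
      _ ≤ K * (‖s‖ ^ m * ‖p‖) := by gcongr; exact hK t ht
      _ = K * ‖s‖ ^ m * ‖p‖ := by ring
  have hh : ContDiff ℝ m h :=
    (hg.dirDeriv p).comp (contDiff_const.add (contDiff_id.smul contDiff_const))
  have htaylor := abs_sub_taylor_le_of_abs_iteratedDeriv_sub_le hh hM
  have hsum : ∑ i ∈ range (m + 1), iteratedDeriv i h 0 / i !
      = ∑ i ∈ range (m + 1), iteratedFDeriv ℝ i (dirDeriv p g) x (fun _ => s) / i ! :=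
    sum_congr rfl fun i hi => by
      rw [hline (Nat.lt_succ_iff.1 (mem_range.1 hi)), zero_smul, add_zero]
  have h1 : h 1 = fderiv ℝ g (x + s) p := by simp [h, dirDeriv]
  rwa [hsum, h1] at htaylor

end

theorem fderiv_taylorPoly_apply {n q : ℕ} {g : EuclideanSpace ℝ (Fin n) → ℝ}
    (hg : ContDiff ℝ q g) (x s p : EuclideanSpace ℝ (Fin n)) :
    fderiv ℝ (fun u => taylorPoly q g x u) s p
      = ∑ i ∈ range q, iteratedFDeriv ℝ i (dirDeriv p g) x (fun _ => s) / i ! := by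
  have hderiv : HasFDerivAt (fun u => taylorPoly q g x u) _ s :=
    HasFDerivAt.fun_sum (u := range (q + 1)) fun i _ =>
      ((iteratedFDeriv ℝ i g x).hasFDerivAt_apply_const s).const_mul (1 / (i ! : ℝ))
  rw [hderiv.fderiv, _root_.sum_apply, sum_range_succ']
  simp only [smul_apply, _root_.sum_apply, ContinuousMultilinearMap.toContinuousLinearMap_apply,
    univ_eq_empty, sum_empty, smul_zero, zero_apply, add_zero, smul_eq_mul]
  refine sum_congr rfl fun i hi => ?_
  have hgi : ContDiff ℝ (i + 1) g := hg.of_le (by exact_mod_cast mem_range.1 hi)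
  simp only [iteratedFDeriv_succ_apply_update_const hgi, sum_const, card_univ, Fintype.card_fin,
    nsmul_eq_mul, Nat.factorial_succ, Nat.cast_mul]
  field_simp

theorem taylor_gradient_remainder_bound {n : ℕ} (q : ℕ) (hq : 1 ≤ q) (L : ℝ)
    (g : EuclideanSpace ℝ (Fin n) → ℝ) (hg : ContDiff ℝ q g)
    (hLip : ∀ x y : EuclideanSpace ℝ (Fin n),
      ‖iteratedFDeriv ℝ q g x - iteratedFDeriv ℝ q g y‖ ≤
        (Nat.factorial (q - 1) : ℝ) * L * ‖x - y‖)
    (x s : EuclideanSpace ℝ (Fin n)) :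
    ‖gradient g (x + s) - gradient (fun u => taylorPoly q g x u) s‖ ≤
      L * ‖s‖ ^ q := by
  obtain ⟨m, rfl⟩ : ∃ m, q = m + 1 := ⟨q - 1, by omega⟩
  rw [Nat.add_sub_cancel] at hLip
  have hLs : 0 ≤ m ! * L * ‖s‖ := by
    simpa using (norm_nonneg _).trans (hLip (x + s) x)
  have hK (t : ℝ) (ht : t ∈ Icc (0 : ℝ) 1) :
      ‖iteratedFDeriv ℝ (m + 1) g (x + t • s) - iteratedFDeriv ℝ (m + 1) g x‖ ≤ m ! * L * ‖s‖ :=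
    calc _ ≤ m ! * L * ‖x + t • s - x‖ := hLip _ _
      _ = t * (m ! * L * ‖s‖) := by
        rw [add_sub_cancel_left, norm_smul, Real.norm_of_nonneg ht.1]; ring
      _ ≤ m ! * L * ‖s‖ := mul_le_of_le_one_left hLs ht.2
  have hbound : 0 ≤ L * ‖s‖ ^ (m + 1) := by
    have hdiv : 0 ≤ m ! * L * ‖s‖ * ‖s‖ ^ m / m ! :=
      div_nonneg (mul_nonneg hLs (by positivity)) (by positivity)
    convert hdiv using 1
    field_simp
    ring
  rw [gradient, gradient, ← map_sub, LinearIsometryEquiv.norm_map]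
  refine ContinuousLinearMap.opNorm_le_bound _ hbound fun p => ?_
  rw [sub_apply, fderiv_taylorPoly_apply hg, Real.norm_eq_abs]
  calc _ ≤ m ! * L * ‖s‖ * ‖s‖ ^ m * ‖p‖ / m ! :=
        abs_fderiv_apply_sub_taylor_le (mod_cast hg) hK p
    _ = L * ‖s‖ ^ (m + 1) * ‖p‖ := by field_simp; ring
end

section
/- Let q ≥ 1, let f^h: ℝ^{n_h} → ℝ and f^H: ℝ^{n_H} → ℝ be q-times continuously differentiable, let P: ℝ^{n_H} → ℝ^{n_h} be linear, let x_k ∈ ℝ^{n_h} and x₀ ∈ ℝ^{n_H}, and let m^H_q be the corrected lower-level model. Then for every i with 1 ≤ i ≤ q and every s ∈ ℝ^{n_H}, the i-th derivative at s = 0 of the map s ↦ m^H_q(x₀, s), applied to i copies of s, equals D^i f^h(x_k)[Ps,…,Ps] (i copies of Ps); in particular the model m^H_q and the function f^h have coherent derivatives up to order q at x₀ and x_k. -/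
/-!
As a function of `s`, the model is `s ↦ f^H(x₀ + s)` plus the polynomial whose degree-`j` part is
the `j`-linear form `(1/j!) (Dʲf^h(x_k) ∘ P − Dʲf^H(x₀))` on the diagonal. Reading off power
series coefficients, the `i`-th derivative at `0` of such a polynomial on `(s, …, s)` is `i!` times
its degree-`i` part. Hence the `i`-th derivative of the model at `0` is
`Dⁱf^H(x₀)[s,…] + Dⁱf^h(x_k)[Ps,…] − Dⁱf^H(x₀)[s,…]`.
-/

open scoped BigOperators

/-- The corrected lower-level model of order `q`:
`m^H_q(x₀,s) = f^H(x₀+s) + ∑_{i=1}^{q} (1/i!) ( Dⁱf^h(x_k)[Ps,…,Ps] − Dⁱf^H(x₀)[s,…,s] )`. -/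
noncomputable def lowerModel {nh nH : ℕ} (q : ℕ)
    (fh : EuclideanSpace ℝ (Fin nh) → ℝ) (fH : EuclideanSpace ℝ (Fin nH) → ℝ)
    (P : EuclideanSpace ℝ (Fin nH) →L[ℝ] EuclideanSpace ℝ (Fin nh))
    (xk : EuclideanSpace ℝ (Fin nh)) (x0 s : EuclideanSpace ℝ (Fin nH)) : ℝ :=
  fH (x0 + s) + ∑ i ∈ Finset.Icc 1 q,
    (1 / (Nat.factorial i) : ℝ) *
      (iteratedFDeriv ℝ i fh xk (fun _ => P s) - iteratedFDeriv ℝ i fH x0 (fun _ => s))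

open Nat Finset

section DiagonalPolynomial

variable {𝕜 E F : Type*} [NontriviallyNormedField 𝕜] [NormedAddCommGroup E] [NormedSpace 𝕜 E]
  [NormedAddCommGroup F] [NormedSpace 𝕜 F]

theorem hasFPowerSeriesOnBall_sum_apply_diag (S : Finset ℕ)
    (T : (n : ℕ) → ContinuousMultilinearMap 𝕜 (fun _ : Fin n => E) F) :
    HasFPowerSeriesOnBall (fun x => ∑ n ∈ S, T n fun _ => x)
      (fun n => if n ∈ S then T n else 0) 0 ⊤ where
  r_le := by
    refine (FormalMultilinearSeries.radius_eq_top_of_forall_image_add_eq_zero _ (S.sup id + 1)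
      fun m => if_neg fun hm => ?_).ge
    have hle := Finset.le_sup (f := id) hm
    simp only [id] at hle
    omega
  r_pos := ENNReal.zero_lt_top
  hasSum {y} _ := by
    rw [zero_add]
    have hsum : HasSum (fun n => (if n ∈ S then T n else 0) fun _ => y)
        (∑ n ∈ S, (if n ∈ S then T n else 0) fun _ => y) :=
      hasSum_sum_of_ne_finset_zero fun n hn => by simp [hn]
    convert hsum using 1
    exact Finset.sum_congr rfl fun n hn => by rw [if_pos hn]

theorem iteratedFDeriv_sum_apply_diag_zero [CompleteSpace F] (S : Finset ℕ)
    (T : (n : ℕ) → ContinuousMultilinearMap 𝕜 (fun _ : Fin n => E) F) (i : ℕ) (s : E) :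
    iteratedFDeriv 𝕜 i (fun x => ∑ n ∈ S, T n fun _ => x) 0 (fun _ => s) =
      if i ∈ S then i ! • T i (fun _ => s) else 0 := by
  rw [← (hasFPowerSeriesOnBall_sum_apply_diag S T).factorial_smul]
  split_ifs <;> simp

end DiagonalPolynomial

section LowerModel

variable {nh nH : ℕ} (fh : EuclideanSpace ℝ (Fin nh) → ℝ) (fH : EuclideanSpace ℝ (Fin nH) → ℝ)
  (P : EuclideanSpace ℝ (Fin nH) →L[ℝ] EuclideanSpace ℝ (Fin nh))
  (xk : EuclideanSpace ℝ (Fin nh)) (x0 : EuclideanSpace ℝ (Fin nH))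

noncomputable def lowerModelCorrection (j : ℕ) :
    ContinuousMultilinearMap ℝ (fun _ : Fin j => EuclideanSpace ℝ (Fin nH)) ℝ :=
  (1 / (j ! : ℝ)) •
    ((iteratedFDeriv ℝ j fh xk).compContinuousLinearMap (fun _ => P) - iteratedFDeriv ℝ j fH x0)

theorem lowerModel_eq_add_sum_correction (q : ℕ) :
    (fun s => lowerModel q fh fH P xk x0 s) =
      fun s => fH (x0 + s) + ∑ j ∈ Icc 1 q, lowerModelCorrection fh fH P xk x0 j fun _ => s :=
  rfl

theorem factorial_smul_lowerModelCorrection_apply_diag (i : ℕ) (s : EuclideanSpace ℝ (Fin nH)) :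
    i ! • lowerModelCorrection fh fH P xk x0 i (fun _ => s) =
      iteratedFDeriv ℝ i fh xk (fun _ => P s) - iteratedFDeriv ℝ i fH x0 (fun _ => s) := by
  rw [lowerModelCorrection, smul_apply, nsmul_eq_mul, smul_eq_mul, ← mul_assoc,
    mul_one_div_cancel (cast_ne_zero.2 i.factorial_ne_zero), one_mul, sub_apply,
    ContinuousMultilinearMap.compContinuousLinearMap_apply]

end LowerModel

theorem lowerModel_derivative_coherence_general {nh nH : ℕ} (q : ℕ)
    (fh : EuclideanSpace ℝ (Fin nh) → ℝ) (fH : EuclideanSpace ℝ (Fin nH) → ℝ)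
    (hfH : ContDiff ℝ q fH)
    (P : EuclideanSpace ℝ (Fin nH) →L[ℝ] EuclideanSpace ℝ (Fin nh))
    (xk : EuclideanSpace ℝ (Fin nh)) (x0 : EuclideanSpace ℝ (Fin nH)) :
    ∀ i : ℕ, 1 ≤ i → i ≤ q → ∀ s : EuclideanSpace ℝ (Fin nH),
      iteratedFDeriv ℝ i (fun t => lowerModel q fh fH P xk x0 t) 0 (fun _ => s) =
        iteratedFDeriv ℝ i fh xk (fun _ => P s) := by
  intro i hi hiq s
  have hshift : ContDiffAt ℝ i (fun t => fH (x0 + t)) 0 :=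
    ((hfH.of_le (by exact_mod_cast hiq)).comp (contDiff_const.add contDiff_id)).contDiffAt
  have hpoly : ContDiffAt ℝ i
      (fun t => ∑ j ∈ Icc 1 q, lowerModelCorrection fh fH P xk x0 j fun _ => t) 0 :=
    (hasFPowerSeriesOnBall_sum_apply_diag _ _).analyticAt.contDiffAt
  rw [lowerModel_eq_add_sum_correction, fun_iteratedFDeriv_add_apply hshift hpoly, add_apply,
    iteratedFDeriv_comp_add_left, add_zero, iteratedFDeriv_sum_apply_diag_zero,
    if_pos (mem_Icc.2 ⟨hi, hiq⟩), factorial_smul_lowerModelCorrection_apply_diag,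
    add_sub_cancel]

theorem lowerModel_derivative_coherence {nh nH : ℕ} (q : ℕ) (hq : 1 ≤ q)
    (fh : EuclideanSpace ℝ (Fin nh) → ℝ) (fH : EuclideanSpace ℝ (Fin nH) → ℝ)
    (hfh : ContDiff ℝ q fh) (hfH : ContDiff ℝ q fH)
    (P : EuclideanSpace ℝ (Fin nH) →L[ℝ] EuclideanSpace ℝ (Fin nh))
    (xk : EuclideanSpace ℝ (Fin nh)) (x0 : EuclideanSpace ℝ (Fin nH)) :
    ∀ i : ℕ, 1 ≤ i → i ≤ q → ∀ s : EuclideanSpace ℝ (Fin nH),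
      iteratedFDeriv ℝ i (fun t => lowerModel q fh fH P xk x0 t) 0 (fun _ => s) =
        iteratedFDeriv ℝ i fh xk (fun _ => P s) :=
  lowerModel_derivative_coherence_general q fh fH hfH P xk x0
end

section
/- Let K > 0, 0 < η₁ < 1, γ₃ > 1, and let (λ_k)_{k≥0} and (ρ_k)_{k≥0} be real sequences with λ₀ > 0 such that for every k: (i) |1 − ρ_k| ≤ K / λ_k; (ii) if ρ_k ≥ η₁ then 0 < λ_{k+1} ≤ λ_k; and (iii) if ρ_k < η₁ then λ_{k+1} = γ₃ λ_k. Then for every k, λ_k ≤ max{ λ₀, γ₃ K / (1 − η₁) }; in particular the regularization parameters remain bounded above. -/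
theorem regularization_parameter_bounded (K η₁ γ₃ : ℝ)
    (hK : 0 < K) (hη₁ : 0 < η₁) (hη₁' : η₁ < 1) (hγ₃ : 1 < γ₃)
    (lam ρ : ℕ → ℝ) (hlam0 : 0 < lam 0)
    (hratio : ∀ k, |1 - ρ k| ≤ K / lam k)
    (hsucc : ∀ k, ρ k ≥ η₁ → 0 < lam (k + 1) ∧ lam (k + 1) ≤ lam k)
    (hunsucc : ∀ k, ρ k < η₁ → lam (k + 1) = γ₃ * lam k) :
    ∀ k, lam k ≤ max (lam 0) (γ₃ * K / (1 - η₁)) := by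
  have h1η : 0 < 1 - η₁ := by linarith
  have hγ₃pos : 0 < γ₃ := by linarith
  have hpos : ∀ k, 0 < lam k := by
    intro k
    induction k with
    | zero => exact hlam0
    | succ n ih =>
      by_cases h : ρ n ≥ η₁
      · exact (hsucc n h).1
      · rw [hunsucc n (lt_of_not_ge h)]; positivity
  intro k
  induction k with
  | zero => exact le_max_left _ _
  | succ n ih =>
    by_cases h : ρ n ≥ η₁
    · exact le_trans (hsucc n h).2 ih
    · push_neg at h
      rw [hunsucc n h]
      have h2 : 1 - η₁ ≤ |1 - ρ n| := by
        rw [abs_of_pos (by linarith)]; linarith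
      have h3 : 1 - η₁ ≤ K / lam n := le_trans h2 (hratio n)
      have h4 : (1 - η₁) * lam n ≤ K := (le_div_iff₀ (hpos n)).mp h3
      have : γ₃ * lam n ≤ γ₃ * K / (1 - η₁) := by
        rw [le_div_iff₀ h1η]
        nlinarith
      exact le_trans this (le_max_right _ _)
end

section
/- Let q ≥ 1, let f^h: ℝ^{n_h} → ℝ and f^H: ℝ^{n_H} → ℝ be q-times continuously differentiable, let P: ℝ^{n_H} → ℝ^{n_h} be linear, R = Pᵀ its adjoint (transpose), x_k ∈ ℝ^{n_h}, x₀ = R x_k, and let m^H_q be the corrected lower-level model. Then for every s ∈ ℝ^{n_H}, R ∇_s T^h_q(x_k, Ps) − ∇_s m^H_q(x₀, s) = ∇_s T^H_q(x₀, s) − ∇f^H(x₀ + s), where T^h_q and T^H_q are the q-th order Taylor polynomials of f^h and f^H respectively. In particular ‖R ∇_s T^h_q(x_k, Ps) − ∇_s m^H_q(x₀, s)‖ equals the norm of the Taylor remainder of the gradient of f^H at x₀. -/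
open scoped BigOperators

/-! The Taylor terms of order `1, …, q` in the correction cancel against those of the Taylor
polynomials, so `m^H_q(x₀, s) = f^H(x₀ + s) + (T^h_q(x_k, Ps) - f^h(x_k)) - (T^H_q(x₀, s) - f^H(x₀))`.
Differentiating in `s`, the chain rule through `P` produces `R ∇T^h_q(x_k, Ps)`, which cancels,
and only `∇f^H(x₀ + s) - ∇_s T^H_q(x₀, s)` survives. -/

open InnerProductSpace

section Gradient

variable {F G : Type*} [NormedAddCommGroup F] [InnerProductSpace ℝ F] [CompleteSpace F]
  [NormedAddCommGroup G] [InnerProductSpace ℝ G] [CompleteSpace G]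
  {f g : F → ℝ} {f' g' x : F}

theorem HasGradientAt.add (hf : HasGradientAt f f' x) (hg : HasGradientAt g g' x) :
    HasGradientAt (fun u => f u + g u) (f' + g') x := by
  rw [hasGradientAt_iff_hasFDerivAt, map_add]
  exact HasFDerivAt.add hf hg

theorem HasGradientAt.sub (hf : HasGradientAt f f' x) (hg : HasGradientAt g g' x) :
    HasGradientAt (fun u => f u - g u) (f' - g') x := by
  rw [hasGradientAt_iff_hasFDerivAt, map_sub]
  exact HasFDerivAt.sub hf hg

theorem HasGradientAt.sub_const (hf : HasGradientAt f f' x) (c : ℝ) :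
    HasGradientAt (fun u => f u - c) f' x :=
  (hasFDerivAt_sub_const_iff c).2 hf

theorem HasGradientAt.comp_const_add (a : F) (hf : HasGradientAt f f' (a + x)) :
    HasGradientAt (fun u => f (a + u)) f' x :=
  (hasFDerivAt_comp_add_left a).2 hf

theorem HasGradientAt.comp_continuousLinearMap {g : G → ℝ} {g' : G} (A : F →L[ℝ] G)
    (hg : HasGradientAt g g' (A x)) :
    HasGradientAt (fun u => g (A u)) (ContinuousLinearMap.adjoint A g') x := by
  have hdual : toDual ℝ F (ContinuousLinearMap.adjoint A g') = (toDual ℝ G g').comp A := by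
    ext v
    exact ContinuousLinearMap.adjoint_inner_left A v g'
  rw [hasGradientAt_iff_hasFDerivAt, hdual]
  exact HasFDerivAt.comp x hg A.hasFDerivAt

end Gradient

section Taylor

variable {n : ℕ} (q : ℕ) (g : EuclideanSpace ℝ (Fin n) → ℝ) (x : EuclideanSpace ℝ (Fin n))

theorem differentiable_taylorPoly : Differentiable ℝ (taylorPoly q g x) := by
  refine Differentiable.fun_sum fun i _ => Differentiable.const_mul ?_ _
  exact ((iteratedFDeriv ℝ i g x).contDiff.differentiable one_ne_zero).comp
    (differentiable_pi.2 fun _ => differentiable_id)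

theorem taylorPoly_eq_add_sum_Icc (s : EuclideanSpace ℝ (Fin n)) :
    taylorPoly q g x s =
      g x + ∑ i ∈ Finset.Icc 1 q,
        (1 / (Nat.factorial i) : ℝ) * iteratedFDeriv ℝ i g x (fun _ => s) := by
  rw [taylorPoly, Finset.range_eq_Ico, Finset.sum_eq_sum_Ico_succ_bot (Nat.succ_pos q)]
  simp [Finset.Ico_add_one_right_eq_Icc]

end Taylor

section LowerModel

variable {nh nH : ℕ} (q : ℕ)
  (fh : EuclideanSpace ℝ (Fin nh) → ℝ) (fH : EuclideanSpace ℝ (Fin nH) → ℝ)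
  (P : EuclideanSpace ℝ (Fin nH) →L[ℝ] EuclideanSpace ℝ (Fin nh))
  (xk : EuclideanSpace ℝ (Fin nh)) (x0 : EuclideanSpace ℝ (Fin nH))

theorem lowerModel_eq_sub_taylorPoly (s : EuclideanSpace ℝ (Fin nH)) :
    lowerModel q fh fH P xk x0 s =
      fH (x0 + s) + (taylorPoly q fh xk (P s) - fh xk) - (taylorPoly q fH x0 s - fH x0) := by
  simp only [lowerModel, taylorPoly_eq_add_sum_Icc, mul_sub, Finset.sum_sub_distrib]
  ring

theorem hasGradientAt_lowerModel {s : EuclideanSpace ℝ (Fin nH)}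
    (hfH : DifferentiableAt ℝ fH (x0 + s)) :
    HasGradientAt (lowerModel q fh fH P xk x0)
      (gradient fH (x0 + s)
        + ContinuousLinearMap.adjoint P (gradient (taylorPoly q fh xk) (P s))
        - gradient (taylorPoly q fH x0) s) s := by
  rw [funext (lowerModel_eq_sub_taylorPoly q fh fH P xk x0)]
  have hfH' := hfH.hasGradientAt.comp_const_add x0
  have hTh := ((differentiable_taylorPoly q fh xk (P s)).hasGradientAt.comp_continuousLinearMap
    P).sub_const (fh xk)
  have hTH := (differentiable_taylorPoly q fH x0 s).hasGradientAt.sub_const (fH x0)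
  exact (hfH'.add hTh).sub hTH

end LowerModel

theorem restricted_taylor_gradient_vs_model_gradient_general {nh nH : ℕ} (q : ℕ) (hq : 1 ≤ q)
    (fh : EuclideanSpace ℝ (Fin nh) → ℝ) (fH : EuclideanSpace ℝ (Fin nH) → ℝ)
    (hfH : ContDiff ℝ q fH)
    (P : EuclideanSpace ℝ (Fin nH) →L[ℝ] EuclideanSpace ℝ (Fin nh))
    (xk : EuclideanSpace ℝ (Fin nh)) (x0 : EuclideanSpace ℝ (Fin nH))
    (s : EuclideanSpace ℝ (Fin nH)) :
    ContinuousLinearMap.adjoint P (gradient (fun u => taylorPoly q fh xk u) (P s)) -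
        gradient (fun u => lowerModel q fh fH P xk x0 u) s =
      gradient (fun u => taylorPoly q fH x0 u) s - gradient fH (x0 + s) ∧
    ‖ContinuousLinearMap.adjoint P (gradient (fun u => taylorPoly q fh xk u) (P s)) -
        gradient (fun u => lowerModel q fh fH P xk x0 u) s‖ =
      ‖gradient fH (x0 + s) - gradient (fun u => taylorPoly q fH x0 u) s‖ := by
  have hdiff : DifferentiableAt ℝ fH (x0 + s) :=
    (hfH.differentiable (by exact_mod_cast Nat.one_le_iff_ne_zero.1 hq)).differentiableAt
  have key : ContinuousLinearMap.adjoint P (gradient (taylorPoly q fh xk) (P s)) -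
      gradient (lowerModel q fh fH P xk x0) s =
      gradient (taylorPoly q fH x0) s - gradient fH (x0 + s) := by
    rw [(hasGradientAt_lowerModel q fh fH P xk x0 hdiff).gradient]
    abel
  exact ⟨key, by rw [key, norm_sub_rev]⟩

theorem restricted_taylor_gradient_vs_model_gradient {nh nH : ℕ} (q : ℕ) (hq : 1 ≤ q)
    (fh : EuclideanSpace ℝ (Fin nh) → ℝ) (fH : EuclideanSpace ℝ (Fin nH) → ℝ)
    (hfh : ContDiff ℝ q fh) (hfH : ContDiff ℝ q fH)
    (P : EuclideanSpace ℝ (Fin nH) →L[ℝ] EuclideanSpace ℝ (Fin nh))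
    (xk : EuclideanSpace ℝ (Fin nh)) (x0 : EuclideanSpace ℝ (Fin nH))
    (hx0 : x0 = ContinuousLinearMap.adjoint P xk)
    (s : EuclideanSpace ℝ (Fin nH)) :
    ContinuousLinearMap.adjoint P (gradient (fun u => taylorPoly q fh xk u) (P s)) -
        gradient (fun u => lowerModel q fh fH P xk x0 u) s =
      gradient (fun u => taylorPoly q fH x0 u) s - gradient fH (x0 + s) ∧
    ‖ContinuousLinearMap.adjoint P (gradient (fun u => taylorPoly q fh xk u) (P s)) -
        gradient (fun u => lowerModel q fh fH P xk x0 u) s‖ =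
      ‖gradient fH (x0 + s) - gradient (fun u => taylorPoly q fH x0 u) s‖ :=
  restricted_taylor_gradient_vs_model_gradient_general q hq fh fH hfH P xk x0 s
end

section
/- Let 0 < γ₁ < 1 < γ₃, λ₀ > 0, λ_max ≥ λ₀, let k_f ∈ ℕ and let (λ_k)_{0 ≤ k ≤ k_f} be a positive sequence. Let K_s and K_u be disjoint sets with K_s ∪ K_u = {0, 1, …, k_f − 1}, such that γ₁ λ_k ≤ λ_{k+1} for k ∈ K_s, λ_{k+1} = γ₃ λ_k for k ∈ K_u, and λ_{k_f} ≤ λ_max. Then |K_u| ≤ (1/log γ₃) log(λ_max/λ₀) + |K_s| · |log γ₁| / log γ₃. -/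
theorem unsuccessful_iterations_bound (γ₁ γ₃ lamMax : ℝ)
    (hγ₁ : 0 < γ₁) (hγ₁' : γ₁ < 1) (hγ₃ : 1 < γ₃)
    (kf : ℕ) (lam : ℕ → ℝ)
    (hlam0 : 0 < lam 0) (hlamMax : lam 0 ≤ lamMax)
    (hpos : ∀ k ≤ kf, 0 < lam k)
    (Ks Ku : Finset ℕ) (hdisj : Disjoint Ks Ku)
    (hunion : Ks ∪ Ku = Finset.range kf)
    (hKs : ∀ k ∈ Ks, γ₁ * lam k ≤ lam (k + 1))
    (hKu : ∀ k ∈ Ku, lam (k + 1) = γ₃ * lam k)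
    (hend : lam kf ≤ lamMax) :
    (Ku.card : ℝ) ≤ (1 / Real.log γ₃) * Real.log (lamMax / lam 0) +
      (Ks.card : ℝ) * |Real.log γ₁| / Real.log γ₃ := by
  have hγ₃0 : (0:ℝ) < γ₃ := lt_trans one_pos hγ₃
  have key : ∀ n, n ≤ kf →
      γ₁ ^ (Ks ∩ Finset.range n).card * (γ₃ ^ (Ku ∩ Finset.range n).card * lam 0)
        ≤ lam n := by
    intro n
    induction n with
    | zero => simp
    | succ m ih =>
      intro hn
      have hm : m < kf := hn
      have ihm := ih (le_of_lt hm)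
      have hmem : m ∈ Ks ∪ Ku := by rw [hunion]; exact Finset.mem_range.mpr hm
      have hmr : m ∉ Finset.range m := by simp
      rcases Finset.mem_union.mp hmem with hs | hu
      · have hmu : m ∉ Ku := Finset.disjoint_left.mp hdisj hs
        have h1 : Ks ∩ Finset.range (m+1) = insert m (Ks ∩ Finset.range m) := by
          rw [Finset.range_add_one, Finset.inter_insert_of_mem hs]
        have h2 : Ku ∩ Finset.range (m+1) = Ku ∩ Finset.range m := by
          rw [Finset.range_add_one, Finset.inter_insert_of_notMem hmu]
        rw [h1, h2, Finset.card_insert_of_notMem (fun h => hmr (Finset.mem_inter.mp h).2)]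
        have := hKs m hs
        calc γ₁ ^ ((Ks ∩ Finset.range m).card + 1) * (γ₃ ^ (Ku ∩ Finset.range m).card * lam 0)
            = γ₁ * (γ₁ ^ (Ks ∩ Finset.range m).card * (γ₃ ^ (Ku ∩ Finset.range m).card * lam 0)) := by ring
          _ ≤ γ₁ * lam m := by
              apply mul_le_mul_of_nonneg_left ihm (le_of_lt hγ₁)
          _ ≤ lam (m+1) := this
      · have hms : m ∉ Ks := Finset.disjoint_right.mp hdisj hu
        have h1 : Ks ∩ Finset.range (m+1) = Ks ∩ Finset.range m := by
          rw [Finset.range_add_one, Finset.inter_insert_of_notMem hms]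
        have h2 : Ku ∩ Finset.range (m+1) = insert m (Ku ∩ Finset.range m) := by
          rw [Finset.range_add_one, Finset.inter_insert_of_mem hu]
        rw [h1, h2, Finset.card_insert_of_notMem (fun h => hmr (Finset.mem_inter.mp h).2),
          hKu m hu]
        calc γ₁ ^ (Ks ∩ Finset.range m).card * (γ₃ ^ ((Ku ∩ Finset.range m).card + 1) * lam 0)
            = γ₃ * (γ₁ ^ (Ks ∩ Finset.range m).card * (γ₃ ^ (Ku ∩ Finset.range m).card * lam 0)) := by ring
          _ ≤ γ₃ * lam m := mul_le_mul_of_nonneg_left ihm (le_of_lt hγ₃0)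
  have hKsub : Ks ⊆ Finset.range kf := by rw [← hunion]; exact Finset.subset_union_left
  have hKusub : Ku ⊆ Finset.range kf := by rw [← hunion]; exact Finset.subset_union_right
  have hfin : γ₁ ^ Ks.card * (γ₃ ^ Ku.card * lam 0) ≤ lamMax := by
    have h := key kf le_rfl
    rw [Finset.inter_eq_left.mpr hKsub, Finset.inter_eq_left.mpr hKusub] at h
    exact h.trans hend
  have hlhs : (0:ℝ) < γ₁ ^ Ks.card * (γ₃ ^ Ku.card * lam 0) := by positivity
  have hlog := Real.log_le_log hlhs hfin
  rw [Real.log_mul (by positivity) (by positivity),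
    Real.log_mul (by positivity) (ne_of_gt hlam0), Real.log_pow, Real.log_pow] at hlog
  have hlogγ₃ : 0 < Real.log γ₃ := Real.log_pos hγ₃
  have hlogγ₁ : Real.log γ₁ < 0 := Real.log_neg hγ₁ hγ₁'
  have habs : |Real.log γ₁| = -Real.log γ₁ := abs_of_neg hlogγ₁
  have hdiv : Real.log (lamMax / lam 0) = Real.log lamMax - Real.log (lam 0) :=
    Real.log_div (ne_of_gt (lt_of_lt_of_le hlam0 hlamMax)) (ne_of_gt hlam0)
  rw [habs, hdiv]
  rw [show 1 / Real.log γ₃ * (Real.log lamMax - Real.log (lam 0)) +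
      (Ks.card : ℝ) * -Real.log γ₁ / Real.log γ₃ =
      (Real.log lamMax - Real.log (lam 0) + (Ks.card : ℝ) * -Real.log γ₁) / Real.log γ₃ from by
    ring, le_div_iff₀ hlogγ₃]
  linarith
end

section
/- Let q ≥ 1, let f: ℝⁿ → ℝ be bounded below by f_low, let ε > 0, c > 0, 0 < γ₁ < 1 < γ₃, λ₀ > 0, λ_max ≥ λ₀. Let k_f ∈ ℕ, (x_k)_{0 ≤ k ≤ k_f} a sequence in ℝⁿ, (λ_k)_{0 ≤ k ≤ k_f} a positive sequence, and K_s, K_u disjoint sets with K_s ∪ K_u = {0, …, k_f − 1}, such that: f(x_{k+1}) ≤ f(x_k) for all k < k_f; for k ∈ K_s, f(x_k) − f(x_{k+1}) ≥ c ε^{(q+1)/q} and γ₁ λ_k ≤ λ_{k+1}; for k ∈ K_u, x_{k+1} = x_k and λ_{k+1} = γ₃ λ_k; and λ_{k_f} ≤ λ_max. Then k_f ≤ (f(x₀) − f_low) / (c ε^{(q+1)/q}) · (1 + |log γ₁| / log γ₃) + (1/log γ₃) log(λ_max/λ₀). (With c = (η₁ λ_min/(q+1)) · min{ 1/K₁,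 κ_H/K₂ }^{(q+1)/q} this gives the worst-case complexity bound O(ε^{−(q+1)/q}) of the multilevel adaptive regularization method of order q to reach ‖∇f(x_k)‖ ≤ ε.) -/
theorem worst_case_complexity_abstract {n : ℕ} (q : ℕ) (hq : 1 ≤ q)
    (f : EuclideanSpace ℝ (Fin n) → ℝ) (fLow : ℝ)
    (hbdd : ∀ y, fLow ≤ f y)
    (ε c γ₁ γ₃ lamMax : ℝ)
    (hε : 0 < ε) (hc : 0 < c)
    (hγ₁ : 0 < γ₁) (hγ₁' : γ₁ < 1) (hγ₃ : 1 < γ₃)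
    (kf : ℕ) (x : ℕ → EuclideanSpace ℝ (Fin n)) (lam : ℕ → ℝ)
    (hlam0 : 0 < lam 0) (hlamMax : lam 0 ≤ lamMax)
    (hpos : ∀ k ≤ kf, 0 < lam k)
    (Ks Ku : Finset ℕ) (hdisj : Disjoint Ks Ku)
    (hunion : Ks ∪ Ku = Finset.range kf)
    (hmono : ∀ k < kf, f (x (k + 1)) ≤ f (x k))
    (hKs : ∀ k ∈ Ks, f (x k) - f (x (k + 1)) ≥ c * ε ^ (((q : ℝ) + 1) / q) ∧
      γ₁ * lam k ≤ lam (k + 1))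
    (hKu : ∀ k ∈ Ku, x (k + 1) = x k ∧ lam (k + 1) = γ₃ * lam k)
    (hend : lam kf ≤ lamMax) :
    (kf : ℝ) ≤ (f (x 0) - fLow) / (c * ε ^ (((q : ℝ) + 1) / q)) *
        (1 + |Real.log γ₁| / Real.log γ₃) +
      (1 / Real.log γ₃) * Real.log (lamMax / lam 0) := by
  have hL₃ : 0 < Real.log γ₃ := Real.log_pos hγ₃
  have hL₁ : Real.log γ₁ < 0 := Real.log_neg hγ₁ hγ₁'
  have habs : |Real.log γ₁| = -Real.log γ₁ := abs_of_neg hL₁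
  set D := c * ε ^ (((q : ℝ) + 1) / q) with hD
  have hDpos : 0 < D := mul_pos hc (Real.rpow_pos_of_pos hε _)
  have hKsub : Ks ⊆ Finset.range kf := hunion ▸ Finset.subset_union_left
  have hKusub : Ku ⊆ Finset.range kf := hunion ▸ Finset.subset_union_right
  -- Claim A: card Ks * D ≤ f x0 - f x_kf
  have hsum1 : ∑ k ∈ Finset.range kf, (f (x k) - f (x (k+1))) = f (x 0) - f (x kf) :=
    Finset.sum_range_sub' (fun k => f (x k)) kf
  have hA : (Ks.card : ℝ) * D ≤ f (x 0) - f (x kf) := by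
    rw [← hsum1]
    calc (Ks.card : ℝ) * D = ∑ _k ∈ Ks, D := by rw [Finset.sum_const, nsmul_eq_mul]
    _ ≤ ∑ k ∈ Ks, (f (x k) - f (x (k+1))) := Finset.sum_le_sum fun k hk => (hKs k hk).1
    _ ≤ ∑ k ∈ Finset.range kf, (f (x k) - f (x (k+1))) :=
        Finset.sum_le_sum_of_subset_of_nonneg hKsub fun k hk _ =>
          sub_nonneg.mpr (hmono k (Finset.mem_range.mp hk))
  have hScard : (Ks.card : ℝ) ≤ (f (x 0) - fLow) / D := by
    rw [le_div_iff₀ hDpos]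
    exact hA.trans (by linarith [hbdd (x kf)])
  -- Claim B
  have hsum2 : ∑ k ∈ Finset.range kf, (Real.log (lam (k+1)) - Real.log (lam k))
      = Real.log (lam kf) - Real.log (lam 0) :=
    Finset.sum_range_sub (fun k => Real.log (lam k)) kf
  have hB : (Ks.card : ℝ) * Real.log γ₁ + (Ku.card : ℝ) * Real.log γ₃
      ≤ Real.log (lam kf) - Real.log (lam 0) := by
    rw [← hsum2, ← hunion, Finset.sum_union hdisj]
    have h1 : (Ks.card : ℝ) * Real.log γ₁
        ≤ ∑ k ∈ Ks, (Real.log (lam (k+1)) - Real.log (lam k)) := by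
      calc (Ks.card : ℝ) * Real.log γ₁ = ∑ _k ∈ Ks, Real.log γ₁ := by
            rw [Finset.sum_const, nsmul_eq_mul]
      _ ≤ _ := by
        apply Finset.sum_le_sum
        intro k hk
        have hk' : k < kf := Finset.mem_range.mp (hKsub hk)
        have hlk : 0 < lam k := hpos k hk'.le
        have hlk1 : 0 < lam (k+1) := hpos (k+1) hk'
        have := (hKs k hk).2
        have hlog : Real.log (γ₁ * lam k) ≤ Real.log (lam (k+1)) :=
          Real.log_le_log (mul_pos hγ₁ hlk) this
        rw [Real.log_mul hγ₁.ne' hlk.ne'] at hlog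
        linarith
    have h2 : (Ku.card : ℝ) * Real.log γ₃
        ≤ ∑ k ∈ Ku, (Real.log (lam (k+1)) - Real.log (lam k)) := by
      calc (Ku.card : ℝ) * Real.log γ₃ = ∑ _k ∈ Ku, Real.log γ₃ := by
            rw [Finset.sum_const, nsmul_eq_mul]
      _ ≤ _ := by
        apply Finset.sum_le_sum
        intro k hk
        have hk' : k < kf := Finset.mem_range.mp (hKusub hk)
        have hlk : 0 < lam k := hpos k hk'.le
        rw [(hKu k hk).2, Real.log_mul (by positivity) hlk.ne']
        simp
    linarith
  have hlogdiv : Real.log (lamMax / lam 0) = Real.log lamMax - Real.log (lam 0) :=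
    Real.log_div (lt_of_lt_of_le hlam0 hlamMax).ne' hlam0.ne'
  have hlogend : Real.log (lam kf) ≤ Real.log lamMax :=
    Real.log_le_log (hpos kf le_rfl) hend
  have hKucard : (Ku.card : ℝ) * Real.log γ₃
      ≤ Real.log (lamMax / lam 0) + (Ks.card : ℝ) * |Real.log γ₁| := by
    rw [habs, hlogdiv]; linarith
  -- counting
  have hcount : (kf : ℝ) = (Ks.card : ℝ) + (Ku.card : ℝ) := by
    have h : Ks.card + Ku.card = kf := by
      rw [← Finset.card_union_of_disjoint hdisj, hunion, Finset.card_range]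
    exact_mod_cast h.symm
  have hKu' : (Ku.card : ℝ)
      ≤ (Real.log (lamMax / lam 0) + (Ks.card : ℝ) * |Real.log γ₁|) / Real.log γ₃ := by
    rw [le_div_iff₀ hL₃]; exact hKucard
  have hfac : (0:ℝ) ≤ 1 + |Real.log γ₁| / Real.log γ₃ :=
    add_nonneg zero_le_one (div_nonneg (abs_nonneg _) hL₃.le)
  have heq : (Ks.card : ℝ) +
      (Real.log (lamMax / lam 0) + (Ks.card : ℝ) * |Real.log γ₁|) / Real.log γ₃
      = (Ks.card : ℝ) * (1 + |Real.log γ₁| / Real.log γ₃)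
        + (1 / Real.log γ₃) * Real.log (lamMax / lam 0) := by
    field_simp; ring
  have hmul : (Ks.card : ℝ) * (1 + |Real.log γ₁| / Real.log γ₃)
      ≤ (f (x 0) - fLow) / D * (1 + |Real.log γ₁| / Real.log γ₃) :=
    mul_le_mul_of_nonneg_right hScard hfac
  linarith [hKu', heq, hmul, hcount]
end

section
/- Let 𝒳 ⊆ ℝⁿ be nonempty, q ≥ 2, let (x_k) be a sequence in ℝⁿ, and let C > 0, C̄ > 0 and k₁ ∈ ℕ be such that: dist(x_k, 𝒳) → 0 as k → ∞; and for all k ≥ k₁, dist(x_{k+1}, 𝒳) ≤ C̄ dist(x_k, 𝒳)^{q} and ‖x_{k+1} − x_k‖ ≤ C dist(x_k, 𝒳). Then the sequence (x_k) converges to some point x*, dist(x*, 𝒳) = 0, and there exist c > 0 and k̄ ∈ ℕ such that ‖x_{k+1} − x*‖ ≤ c ‖x_k − x*‖^{q} for all k ≥ k̄ (one may take c = 2 C C̄); i.e. (x_k) converges to x* with rate of order at least q. -/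
open Filter

theorem local_qth_order_convergence {n : ℕ}
    (X : Set (EuclideanSpace ℝ (Fin n))) (hX : X.Nonempty)
    (q : ℕ) (hq : 2 ≤ q)
    (x : ℕ → EuclideanSpace ℝ (Fin n))
    (C Cbar : ℝ) (hC : 0 < C) (hCbar : 0 < Cbar) (k₁ : ℕ)
    (hdist : Tendsto (fun k => Metric.infDist (x k) X) atTop (nhds 0))
    (hcontr : ∀ k ≥ k₁, Metric.infDist (x (k + 1)) X ≤
      Cbar * Metric.infDist (x k) X ^ q)
    (hstep : ∀ k ≥ k₁, ‖x (k + 1) - x k‖ ≤ C * Metric.infDist (x k) X) :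
    ∃ xstar : EuclideanSpace ℝ (Fin n),
      Tendsto x atTop (nhds xstar) ∧
      Metric.infDist xstar X = 0 ∧
      ∃ c > (0 : ℝ), ∃ kbar : ℕ, ∀ k ≥ kbar,
        ‖x (k + 1) - xstar‖ ≤ c * ‖x k - xstar‖ ^ q := by
  set d : ℕ → ℝ := fun k => Metric.infDist (x k) X with hd
  have hd0 : ∀ k, 0 ≤ d k := fun k => Metric.infDist_nonneg
  -- eventually Cbar * d k ^ (q-1) < 1/2
  have hq1 : q - 1 ≠ 0 := by omega
  have hpow : Tendsto (fun k => Cbar * d k ^ (q - 1)) atTop (nhds 0) := by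
    have := (hdist.pow (q - 1)).const_mul Cbar
    simpa [zero_pow hq1] using this
  obtain ⟨k₀, hk₀⟩ := eventually_atTop.mp
    (hpow.eventually_lt_const (by norm_num : (0:ℝ) < 1/2))
  set k₂ := max k₀ k₁ with hk₂
  have hk₂1 : k₁ ≤ k₂ := le_max_right _ _
  have hhalf : ∀ m, k₂ ≤ m → d (m + 1) ≤ (1/2) * d m := by
    intro m hm
    have h1 : d (m + 1) ≤ Cbar * d m ^ q := hcontr m (hk₂1.trans hm)
    have hqe : q = (q - 1) + 1 := by omega
    have h2 : Cbar * d m ^ q = (Cbar * d m ^ (q - 1)) * d m := by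
      conv_lhs => rw [hqe]
      rw [pow_succ]; ring
    have h3 : Cbar * d m ^ (q - 1) < 1/2 := hk₀ m ((le_max_left _ _).trans hm)
    calc d (m + 1) ≤ (Cbar * d m ^ (q - 1)) * d m := by rw [← h2]; exact h1
      _ ≤ (1/2) * d m := mul_le_mul_of_nonneg_right h3.le (hd0 m)
  have hgeo : ∀ k, k₂ ≤ k → ∀ j, d (k + j) ≤ d k * (1/2) ^ j := by
    intro k hk j
    induction j with
    | zero => simp
    | succ j ih =>
      have : d (k + j + 1) ≤ (1/2) * d (k + j) := hhalf (k + j) (by omega)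
      calc d (k + (j + 1)) = d (k + j + 1) := by ring_nf
        _ ≤ (1/2) * d (k + j) := this
        _ ≤ (1/2) * (d k * (1/2) ^ j) := by linarith [ih]
        _ = d k * (1/2) ^ (j + 1) := by ring
  have hsum : ∀ k, k₂ ≤ k → ∀ j,
      dist (x k) (x (k + j)) ≤ C * d k * (2 - 2 * (1/2) ^ j) := by
    intro k hk j
    induction j with
    | zero => simp
    | succ j ih =>
      have hstepj : dist (x (k + j)) (x (k + j + 1)) ≤ C * d (k + j) := by
        rw [dist_comm, dist_eq_norm]
        exact hstep (k + j) (by omega)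
      have hdj : d (k + j) ≤ d k * (1/2) ^ j := hgeo k hk j
      have htri : dist (x k) (x (k + (j + 1))) ≤
          dist (x k) (x (k + j)) + dist (x (k + j)) (x (k + j + 1))  := by
        have : k + (j + 1) = k + j + 1 := by ring
        rw [this]; exact dist_triangle _ _ _
      have : dist (x k) (x (k + (j + 1))) ≤
          C * d k * (2 - 2 * (1/2) ^ j) + C * (d k * (1/2) ^ j) := by
        have h2 : C * d (k + j) ≤ C * (d k * (1/2) ^ j) :=
          mul_le_mul_of_nonneg_left hdj hC.le
        linarith [htri, hstepj, h2, ih]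
      calc dist (x k) (x (k + (j + 1))) ≤
          C * d k * (2 - 2 * (1/2) ^ j) + C * (d k * (1/2) ^ j) := this
        _ = C * d k * (2 - 2 * (1/2) ^ (j + 1)) := by ring
  have hbound : ∀ k, k₂ ≤ k → ∀ j, dist (x k) (x (k + j)) ≤ 2 * C * d k := by
    intro k hk j
    have h1 := hsum k hk j
    have h2 : (0:ℝ) ≤ (1/2) ^ j := by positivity
    nlinarith [mul_nonneg hC.le (hd0 k)]
  -- Cauchy
  have hcau : CauchySeq (fun m => x (m + k₂)) := by
    apply cauchySeq_of_le_geometric (1/2) (2 * (C * d k₂)) (by norm_num)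
    intro m
    have h1 : dist (x (m + k₂)) (x (m + k₂ + 1)) ≤ C * d (m + k₂) := by
      rw [dist_comm, dist_eq_norm]
      exact hstep (m + k₂) (by omega)
    have h2 : d (m + k₂) ≤ d k₂ * (1/2) ^ m := by
      have := hgeo k₂ le_rfl m
      simpa [add_comm] using this
    have h3 : C * d (m + k₂) ≤ C * (d k₂ * (1/2) ^ m) :=
      mul_le_mul_of_nonneg_left h2 hC.le
    calc dist (x (m + k₂)) (x (m + 1 + k₂)) = dist (x (m + k₂)) (x (m + k₂ + 1)) := by
          ring_nf
      _ ≤ C * (d k₂ * (1/2) ^ m) := h1.trans h3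
      _ ≤ 2 * (C * d k₂) * (1/2) ^ m := by
          nlinarith [mul_nonneg hC.le (hd0 k₂), pow_nonneg (by norm_num : (0:ℝ) ≤ 1/2) m]
  obtain ⟨xstar, hxs⟩ := cauchySeq_tendsto_of_complete hcau
  have hx : Tendsto x atTop (nhds xstar) :=
    (tendsto_add_atTop_iff_nat k₂).mp hxs
  have hzero : Metric.infDist xstar X = 0 := by
    have h1 : Tendsto (fun k => Metric.infDist (x k) X) atTop
        (nhds (Metric.infDist xstar X)) :=
      ((Metric.continuous_infDist_pt X).tendsto xstar).comp hx
    exact tendsto_nhds_unique h1 hdist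
  refine ⟨xstar, hx, hzero, 2 * C * Cbar, by positivity, k₂, ?_⟩
  have hlim : ∀ k, k₂ ≤ k → ‖x k - xstar‖ ≤ 2 * C * d k := by
    intro k hk
    rw [← dist_eq_norm]
    have htend : Tendsto (fun j => dist (x k) (x (k + j))) atTop
        (nhds (dist (x k) xstar)) := by
      have hx' : Tendsto (fun j => x (k + j)) atTop (nhds xstar) := by
        have := (tendsto_add_atTop_iff_nat k).mpr hx
        simpa [add_comm] using this
      exact (Continuous.tendsto (continuous_const.dist continuous_id) xstar).comp hx'
    exact le_of_tendsto' htend (fun j => hbound k hk j)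
  intro k hk
  have h1 : ‖x (k + 1) - xstar‖ ≤ 2 * C * d (k + 1) := hlim (k + 1) (by omega)
  have h2 : d (k + 1) ≤ Cbar * d k ^ q := hcontr k (hk₂1.trans hk)
  have h3 : d k ≤ ‖x k - xstar‖ := by
    have := Metric.infDist_le_infDist_add_dist (x := x k) (y := xstar) (s := X)
    rw [hzero, dist_eq_norm] at this
    simpa using this
  have h4 : d k ^ q ≤ ‖x k - xstar‖ ^ q := pow_le_pow_left₀ (hd0 k) h3 q
  calc ‖x (k + 1) - xstar‖ ≤ 2 * C * d (k + 1) := h1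
    _ ≤ 2 * C * (Cbar * d k ^ q) := by nlinarith
    _ = 2 * C * Cbar * d k ^ q := by ring
    _ ≤ 2 * C * Cbar * ‖x k - xstar‖ ^ q :=
        mul_le_mul_of_nonneg_left h4 (by positivity)
end
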